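/- arXiv:1104.2395 — 3 statements merged into one kernel-verified Lean document; each statement's English description precedes it below -/
import Mathlib

section
/- Let p, α, β be real numbers and let r₁, r₂, r₃ be real numbers with 2 ≤ r₁ ≤ p, 2 ≤ r₂ ≤ α, and 2 ≤ r₃ ≤ β. Then for every continuously differentiable function v : [0,1] → ℝ one has (∫₀¹ |v|^p dx)^{r₁/p} + |v(0)|^{r₂} + |v(1)|^{r₃} ≤ 5·( ‖v‖₁² + ∫₀¹ |v|^p dx + |v(0)|^α + |v(1)|^β ). -/
/-!
Each power on the left is interpolated between the square and the power on the right: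
`t ^ a ≤ t ^ c + t ^ b` for `c ≤ a ≤ b`. This leaves `A ^ (2 / p) + v(0)² + v(1)²`, where
`A = ∫ |v| ^ p` and `A ^ (2 / p) ≤ max |v|²`. A point value `v(x)²` is at most the mean of `v²`
plus the total variation `∫ |2 v v'| ≤ ε ‖v‖² + ε⁻¹ ‖v'‖²`; with `ε = 2 / 3` the three point
values together cost at most `3 (5/3 ‖v‖² + 3/2 ‖v'‖²) ≤ 5 ‖v‖₁²`.
-/

open intervalIntegral Set

theorem Real.rpow_le_rpow_add_rpow {t a b c : ℝ} (ht : 0 ≤ t) (hc : 0 ≤ c) (hca : c ≤ a)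
    (hab : a ≤ b) : t ^ a ≤ t ^ c + t ^ b := by
  rcases le_total t 1 with h | h
  · linarith [Real.rpow_le_rpow_of_exponent_ge' ht h hc hca, Real.rpow_nonneg ht b]
  · linarith [Real.rpow_le_rpow_of_exponent_le h hab, Real.rpow_nonneg ht c]

theorem ContDiff.abs_sub_le_integral_abs_deriv {f : ℝ → ℝ} (hf : ContDiff ℝ 1 f) {a b x y : ℝ}
    (hx : x ∈ Icc a b) (hy : y ∈ Icc a b) : |f x - f y| ≤ ∫ t in a..b, |deriv f t| := by
  wlog hyx : y ≤ x generalizing x y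
  · rw [abs_sub_comm]; exact this hy hx (le_of_not_ge hyx)
  rw [← integral_deriv_eq_sub (fun t _ => hf.differentiable one_ne_zero t)
    ((hf.continuous_deriv le_rfl).intervalIntegrable y x)]
  calc |∫ t in y..x, deriv f t| ≤ ∫ t in y..x, |deriv f t| := abs_integral_le_integral_abs hyx
    _ ≤ ∫ t in a..b, |deriv f t| := integral_mono_interval hy.1 hyx hx.2
        (Filter.Eventually.of_forall fun t => abs_nonneg _)
        ((hf.continuous_deriv le_rfl).abs.intervalIntegrable a b)

theorem ContinuousOn.exists_mul_le_integral {f : ℝ → ℝ} {a b : ℝ} (hab : a ≤ b)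
    (hf : ContinuousOn f (Icc a b)) : ∃ y ∈ Icc a b, (b - a) * f y ≤ ∫ t in a..b, f t := by
  obtain ⟨y, hy, hmin⟩ := isCompact_Icc.exists_isMinOn (nonempty_Icc.2 hab) hf
  refine ⟨y, hy, ?_⟩
  calc (b - a) * f y = ∫ _ in a..b, f y := by simp
    _ ≤ ∫ t in a..b, f t := integral_mono_on hab intervalIntegrable_const
        (hf.intervalIntegrable_of_Icc hab) fun t ht => hmin ht

theorem ContDiff.mul_le_integral_add_integral_abs_deriv {f : ℝ → ℝ} (hf : ContDiff ℝ 1 f)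
    {a b x : ℝ} (hx : x ∈ Icc a b) :
    (b - a) * f x ≤ (∫ t in a..b, f t) + (b - a) * ∫ t in a..b, |deriv f t| := by
  have hab : a ≤ b := hx.1.trans hx.2
  obtain ⟨y, hy, hmean⟩ := hf.continuous.continuousOn.exists_mul_le_integral hab
  have hvar := (abs_le.1 (hf.abs_sub_le_integral_abs_deriv hx hy)).2
  nlinarith [sub_nonneg.2 hab]

theorem ContDiff.sq_le_integral_sq_add_integral_deriv_sq {v : ℝ → ℝ} (hv : ContDiff ℝ 1 v)
    {ε : ℝ} (hε : 0 < ε) {x : ℝ} (hx : x ∈ Icc (0 : ℝ) 1) :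
    v x ^ 2 ≤ (1 + ε) * (∫ t in (0:ℝ)..1, v t ^ 2) + ε⁻¹ * ∫ t in (0:ℝ)..1, deriv v t ^ 2 := by
  have hv' := hv.continuous_deriv le_rfl
  have hderiv : deriv (fun t => v t ^ 2) = fun t => 2 * v t * deriv v t := by
    ext t; simp [deriv_fun_pow (hv.differentiable one_ne_zero t)]
  have hamgm : ∀ t, |2 * v t * deriv v t| ≤ ε * v t ^ 2 + ε⁻¹ * deriv v t ^ 2 := by
    intro t
    have hεinv : ε * ε⁻¹ = 1 := mul_inv_cancel₀ hε.ne'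
    rw [abs_mul, abs_mul, abs_two, ← sq_abs (v t), ← sq_abs (deriv v t)]
    nlinarith [mul_nonneg (inv_nonneg.2 hε.le) (sq_nonneg (ε * |v t| - |deriv v t|))]
  have hbound := (hv.pow 2).mul_le_integral_add_integral_abs_deriv hx
  simp only [sub_zero, one_mul, hderiv] at hbound
  have hint : ∫ t in (0:ℝ)..1, |2 * v t * deriv v t| ≤
      ∫ t in (0:ℝ)..1, (ε * v t ^ 2 + ε⁻¹ * deriv v t ^ 2) :=
    integral_mono_on zero_le_one
      ((by fun_prop : Continuous _).intervalIntegrable _ _)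
      ((by fun_prop : Continuous _).intervalIntegrable _ _) fun t _ => hamgm t
  rw [integral_add ((by fun_prop : Continuous _).intervalIntegrable _ _)
    ((by fun_prop : Continuous _).intervalIntegrable _ _), integral_const_mul,
    integral_const_mul] at hint
  linarith

theorem integral_rpow_abs_rpow_div_le {v : ℝ → ℝ} (hv : Continuous v) {p r M : ℝ} (hp : 0 < p)
    (hr : 0 ≤ r) (hM : ∀ x ∈ Icc (0 : ℝ) 1, |v x| ≤ M) :
    (∫ x in (0:ℝ)..1, |v x| ^ p) ^ (r / p) ≤ M ^ r := by
  have hM0 : 0 ≤ M := (abs_nonneg _).trans (hM 0 (left_mem_Icc.2 zero_le_one))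
  have hle : ∫ x in (0:ℝ)..1, |v x| ^ p ≤ M ^ p :=
    calc ∫ x in (0:ℝ)..1, |v x| ^ p ≤ ∫ _ in (0:ℝ)..1, M ^ p :=
          integral_mono_on zero_le_one
            ((hv.abs.rpow_const fun _ => Or.inr hp.le).intervalIntegrable _ _)
            intervalIntegrable_const fun x hx => Real.rpow_le_rpow (abs_nonneg _) (hM x hx) hp.le
      _ = M ^ p := by simp
  calc (∫ x in (0:ℝ)..1, |v x| ^ p) ^ (r / p) ≤ (M ^ p) ^ (r / p) :=
        Real.rpow_le_rpow (integral_nonneg zero_le_one fun x _ => by positivity) hle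
          (div_nonneg hr hp.le)
    _ = M ^ r := by rw [← Real.rpow_mul hM0, mul_div_cancel₀ r hp.ne']

/-- Lemma 3.3. -/
theorem stmt_4 (p α β r₁ r₂ r₃ : ℝ)
    (hr₁ : 2 ≤ r₁) (hr₁p : r₁ ≤ p)
    (hr₂ : 2 ≤ r₂) (hr₂α : r₂ ≤ α)
    (hr₃ : 2 ≤ r₃) (hr₃β : r₃ ≤ β)
    (v : ℝ → ℝ) (hv : ContDiff ℝ 1 v) :
    (∫ x in (0:ℝ)..1, |v x| ^ p) ^ (r₁ / p) + |v 0| ^ r₂ + |v 1| ^ r₃ ≤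
      5 * (((∫ x in (0:ℝ)..1, (v x) ^ 2) + ∫ x in (0:ℝ)..1, (deriv v x) ^ 2) +
        (∫ x in (0:ℝ)..1, |v x| ^ p) + |v 0| ^ α + |v 1| ^ β) := by
  have hp : 0 < p := by linarith
  set A := ∫ x in (0:ℝ)..1, |v x| ^ p
  have hA : 0 ≤ A := integral_nonneg zero_le_one fun x _ => by positivity
  have hD : 0 ≤ ∫ x in (0:ℝ)..1, (deriv v x) ^ 2 :=
    integral_nonneg zero_le_one fun x _ => sq_nonneg _
  obtain ⟨c, hc, hmax⟩ := isCompact_Icc.exists_isMaxOn (nonempty_Icc.2 zero_le_one)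
    hv.continuous.abs.continuousOn
  have hAc : A ^ (2 / p) ≤ v c ^ 2 := by
    simpa [Real.rpow_two, sq_abs] using
      integral_rpow_abs_rpow_div_le hv.continuous hp zero_le_two fun x hx => hmax hx
  have hsup : ∀ x ∈ Icc (0 : ℝ) 1, v x ^ 2 ≤
      5 / 3 * (∫ x in (0:ℝ)..1, (v x) ^ 2) + 3 / 2 * ∫ x in (0:ℝ)..1, (deriv v x) ^ 2 := by
    intro x hx
    convert hv.sq_le_integral_sq_add_integral_deriv_sq (ε := 2 / 3) (by norm_num) hx using 3 <;>
      norm_num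
  have h₁ : A ^ (r₁ / p) ≤ A ^ (2 / p) + A ^ (1 : ℝ) :=
    Real.rpow_le_rpow_add_rpow hA (by positivity) (by gcongr) ((div_le_one hp).2 hr₁p)
  have h₂ := Real.rpow_le_rpow_add_rpow (abs_nonneg (v 0)) zero_le_two hr₂ hr₂α
  have h₃ := Real.rpow_le_rpow_add_rpow (abs_nonneg (v 1)) zero_le_two hr₃ hr₃β
  simp only [Real.rpow_one, Real.rpow_two, sq_abs] at h₁ h₂ h₃
  linarith [hsup 0 (left_mem_Icc.2 zero_le_one), hsup 1 (right_mem_Icc.2 zero_le_one), hsup c hc,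
    Real.rpow_nonneg (abs_nonneg (v 0)) α, Real.rpow_nonneg (abs_nonneg (v 1)) β]
end

section
/- Let T > 0, let d₀ > 0 and d₁, d₂, d₃, d₄ ≥ 0 be constants, and let a, b, c > 1 be real exponents. Then there exist T* ∈ (0, T] and a constant C > 0, depending only on T, d₀, d₁, d₂, d₃, d₄, a, b, c (and not on S), such that every continuous function S : [0,T] → [0,∞) satisfying S(t) ≤ d₀ + ∫₀ᵗ ( d₁·S(s)^a + d₂·S(s)^b + d₃·S(s)^c + d₄·S(s) ) ds for all t ∈ [0,T] also satisfies S(t) ≤ C for all t ∈ [0,T*]. -/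
open intervalIntegral

/-- Lemma 2.5: uniform local bound for a superlinear Volterra integral inequality;
the time `T*` and the bound `C` do not depend on the function `S`. -/
theorem stmt_8 (T d₀ d₁ d₂ d₃ d₄ a b c : ℝ) (hT : 0 < T) (hd₀ : 0 < d₀)
    (hd₁ : 0 ≤ d₁) (hd₂ : 0 ≤ d₂) (hd₃ : 0 ≤ d₃) (hd₄ : 0 ≤ d₄)
    (ha : 1 < a) (hb : 1 < b) (hc : 1 < c) :
    ∃ Tstar ∈ Set.Ioc (0 : ℝ) T, ∃ C > (0 : ℝ),
      ∀ S : ℝ → ℝ, ContinuousOn S (Set.Icc 0 T) →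
        (∀ t ∈ Set.Icc (0 : ℝ) T, 0 ≤ S t) →
        (∀ t ∈ Set.Icc (0 : ℝ) T,
          S t ≤ d₀ + ∫ s in (0:ℝ)..t,
            (d₁ * S s ^ a + d₂ * S s ^ b + d₃ * S s ^ c + d₄ * S s)) →
        ∀ t ∈ Set.Icc (0 : ℝ) Tstar, S t ≤ C := by
  set C : ℝ := 2 * d₀ with hCdef
  have hC0 : 0 < C := by positivity
  set M : ℝ := d₁ * C ^ a + d₂ * C ^ b + d₃ * C ^ c + d₄ * C with hMdef
  have hM0 : 0 ≤ M := by positivity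
  set Tstar : ℝ := min T (d₀ / (M + 1)) with hTs
  have hM1 : (0:ℝ) < M + 1 := by linarith
  have hTs0 : 0 < Tstar := lt_min hT (by positivity)
  have hTsT : Tstar ≤ T := min_le_left _ _
  have hTsM : Tstar * M < d₀ := by
    have h1 : Tstar * M ≤ (d₀ / (M + 1)) * M := by
      apply mul_le_mul_of_nonneg_right (min_le_right _ _) hM0
    have h2 : (d₀ / (M + 1)) * M < d₀ := by
      rw [div_mul_eq_mul_div, div_lt_iff₀ hM1]
      nlinarith
    exact lt_of_le_of_lt h1 h2
  refine ⟨Tstar, ⟨hTs0, hTsT⟩, C, hC0, ?_⟩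
  intro S hScont hSnn hSineq
  -- the set of times up to which S stays below C
  set A : Set ℝ := {t | t ∈ Set.Icc 0 Tstar ∧ ∀ s ∈ Set.Icc 0 t, S s ≤ C} with hAdef
  have hS0 : S 0 ≤ d₀ := by
    have := hSineq 0 ⟨le_refl _, hT.le⟩
    simpa [intervalIntegral.integral_same] using this
  have h0A : (0:ℝ) ∈ A := by
    refine ⟨⟨le_refl _, hTs0.le⟩, ?_⟩
    intro s hs
    have : s = 0 := le_antisymm hs.2 hs.1
    subst this
    linarith
  have hAne : A.Nonempty := ⟨0, h0A⟩
  have hAbdd : BddAbove A := ⟨Tstar, fun t ht => ht.1.2⟩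
  set t₀ : ℝ := sSup A with ht₀def
  have ht₀0 : 0 ≤ t₀ := le_csSup hAbdd h0A
  have ht₀Ts : t₀ ≤ Tstar := csSup_le hAne (fun t ht => ht.1.2)
  have hIccsub : Set.Icc (0:ℝ) Tstar ⊆ Set.Icc 0 T := Set.Icc_subset_Icc le_rfl hTsT
  -- S ≤ C strictly below t₀
  have hub : ∀ s, 0 ≤ s → s < t₀ → S s ≤ C := by
    intro s hs0 hst
    obtain ⟨t, htA, hst'⟩ := exists_lt_of_lt_csSup hAne hst
    exact htA.2 s ⟨hs0, hst'.le⟩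
  -- S t₀ ≤ C
  have hSC : ∀ s ∈ Set.Icc (0:ℝ) t₀, S s ≤ C := by
    intro s hs
    rcases lt_or_eq_of_le hs.2 with h | h
    · exact hub s hs.1 h
    · subst h
      rcases eq_or_lt_of_le ht₀0 with h0 | h0
      · rw [← h0]; linarith
      · -- limit from the left
        have htmem : t₀ ∈ Set.Icc (0:ℝ) T := ⟨ht₀0, le_trans ht₀Ts hTsT⟩
        have hcw : ContinuousWithinAt S (Set.Ico 0 t₀) t₀ := by
          apply (hScont t₀ htmem).mono
          exact fun x hx => ⟨hx.1, le_trans hx.2.le (le_trans ht₀Ts hTsT)⟩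
        have hne : (nhdsWithin t₀ (Set.Ico 0 t₀)).NeBot := by
          rw [← mem_closure_iff_nhdsWithin_neBot, closure_Ico h0.ne]
          exact ⟨ht₀0, le_refl _⟩
        refine le_of_tendsto hcw ?_
        filter_upwards [self_mem_nhdsWithin] with x hx
        exact hub x hx.1 hx.2
  -- the integrand is continuous on [0,T]
  set f : ℝ → ℝ := fun s => d₁ * S s ^ a + d₂ * S s ^ b + d₃ * S s ^ c + d₄ * S s
    with hfdef
  have hfcont : ContinuousOn f (Set.Icc 0 T) := by
    have hpow : ∀ p : ℝ, 1 < p → ContinuousOn (fun s => S s ^ p) (Set.Icc 0 T) := by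
      intro p hp
      exact hScont.rpow_const (fun x hx => Or.inr (by linarith))
    exact (((continuousOn_const.mul (hpow a ha)).add
      (continuousOn_const.mul (hpow b hb))).add
      (continuousOn_const.mul (hpow c hc))).add (continuousOn_const.mul hScont)
  -- strict bound at t₀
  have hSt₀ : S t₀ < C := by
    have htmem : t₀ ∈ Set.Icc (0:ℝ) T := ⟨ht₀0, le_trans ht₀Ts hTsT⟩
    have hsub : Set.uIcc (0:ℝ) t₀ ⊆ Set.Icc 0 T := by
      rw [Set.uIcc_of_le ht₀0]
      exact Set.Icc_subset_Icc le_rfl htmem.2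
    have hint : IntervalIntegrable f MeasureTheory.volume 0 t₀ :=
      (hfcont.mono hsub).intervalIntegrable
    have hintM : IntervalIntegrable (fun _ : ℝ => M) MeasureTheory.volume 0 t₀ :=
      intervalIntegrable_const
    have hmono : ∫ s in (0:ℝ)..t₀, f s ≤ ∫ _ in (0:ℝ)..t₀, M := by
      apply intervalIntegral.integral_mono_on ht₀0 hint hintM
      intro x hx
      have hxT : x ∈ Set.Icc (0:ℝ) T := ⟨hx.1, le_trans hx.2 htmem.2⟩
      have hx0 : 0 ≤ S x := hSnn x hxT
      have hxC : S x ≤ C := hSC x hx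
      have hra : S x ^ a ≤ C ^ a := Real.rpow_le_rpow hx0 hxC (by linarith)
      have hrb : S x ^ b ≤ C ^ b := Real.rpow_le_rpow hx0 hxC (by linarith)
      have hrc : S x ^ c ≤ C ^ c := Real.rpow_le_rpow hx0 hxC (by linarith)
      simp only [hfdef, hMdef]
      have := mul_le_mul_of_nonneg_left hra hd₁
      have := mul_le_mul_of_nonneg_left hrb hd₂
      have := mul_le_mul_of_nonneg_left hrc hd₃
      have := mul_le_mul_of_nonneg_left hxC hd₄
      linarith
    have hconst : ∫ _ in (0:ℝ)..t₀, M = t₀ * M := by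
      rw [intervalIntegral.integral_const, smul_eq_mul, sub_zero]
    have h1 : S t₀ ≤ d₀ + t₀ * M := by
      have := hSineq t₀ htmem
      rw [hconst] at hmono
      linarith
    have h2 : t₀ * M ≤ Tstar * M := mul_le_mul_of_nonneg_right ht₀Ts hM0
    calc S t₀ ≤ d₀ + t₀ * M := h1
      _ ≤ d₀ + Tstar * M := by linarith
      _ < d₀ + d₀ := by linarith
      _ = C := by rw [hCdef]; ring
  -- t₀ = Tstar
  have ht₀eq : t₀ = Tstar := by
    by_contra hne
    have hlt : t₀ < Tstar := lt_of_le_of_ne ht₀Ts hne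
    have htmem : t₀ ∈ Set.Icc (0:ℝ) T := ⟨ht₀0, le_trans ht₀Ts hTsT⟩
    have hcw : ContinuousWithinAt S (Set.Icc 0 T) t₀ := hScont t₀ htmem
    have hev : ∀ᶠ x in nhdsWithin t₀ (Set.Icc 0 T), S x < C :=
      hcw.eventually_lt_const hSt₀
    rw [Filter.eventually_iff, Metric.mem_nhdsWithin_iff] at hev
    obtain ⟨ε, hε, hball⟩ := hev
    set t₁ : ℝ := min Tstar (t₀ + ε / 2) with ht₁def
    have ht₁gt : t₀ < t₁ := lt_min hlt (by linarith)
    have ht₁A : t₁ ∈ A := by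
      refine ⟨⟨le_trans ht₀0 ht₁gt.le, min_le_left _ _⟩, ?_⟩
      intro s hs
      rcases le_or_gt s t₀ with h | h
      · exact hSC s ⟨hs.1, h⟩
      · have hsT : s ∈ Set.Icc (0:ℝ) T :=
          ⟨hs.1, le_trans hs.2 (le_trans (min_le_left _ _) hTsT)⟩
        have hdist : dist s t₀ < ε := by
          rw [Real.dist_eq, abs_of_pos (by linarith)]
          have : s ≤ t₀ + ε / 2 := le_trans hs.2 (min_le_right _ _)
          linarith
        exact (hball ⟨Metric.mem_ball.mpr hdist, hsT⟩).le
    have : t₁ ≤ t₀ := le_csSup hAbdd ht₁A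
    linarith
  intro t ht
  exact hSC t ⟨ht.1, ht₀eq ▸ ht.2⟩
end

section
/- Let p, α, β > 2 be real numbers, q = min{p, α, β}, λ, λ₀, λ₁ > 0, and let δ be a real number with 0 < δ < (q−2)/q. Let v : [0,1] → ℝ be continuously differentiable and w : [0,1] → ℝ be continuous, and define E = (1/2)‖w‖² + (1/2)‖v‖₁² − (1/p)∫₀¹|v|^p dx − (1/α)|v(0)|^α − (1/β)|v(1)|^β, ψ = ∫₀¹ v(x)w(x) dx + (λ/2)‖v‖² + (λ₀/2)|v(0)|² + (λ₁/2)|v(1)|², 𝓛 = E + δψ, and I = ‖v‖₁² − ∫₀¹|v|^p dx − |v(0)|^α − |v(1)|^β. If I ≥ 0, then β₁·E ≤ 𝓛 ≤ β₂·E, where β₁ = min{1−δ, (q−2)/q − δ} > 0 and β₂ = 1 + δ + (2q/(q−2))·( 1/2 + δ·((1+λ)/2 + λ₀ + λ₁) ). -/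
open intervalIntegral

/-!
The trace bound `v(t)² ≤ 2‖v‖₁²` (fundamental theorem of calculus, started at a point where `v²`
equals its mean) and `|∫ v w| ≤ (‖v‖² + ‖w‖²)/2` reduce the lemma to real inequalities. Under
`I ≥ 0` the potential terms of `E` are absorbed by `(1/q)‖v‖₁²`, so
`E ≥ ‖w‖²/2 + (q - 2)/(2q) ‖v‖₁²`; with `-(‖v‖₁² + ‖w‖²)/2 ≤ ψ ≤ ‖w‖²/2 + C ‖v‖₁²` this yields
both bounds.
-/

lemma abs_two_mul_le_sq_add_sq (a b : ℝ) : |2 * (a * b)| ≤ a ^ 2 + b ^ 2 := by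
  simpa [abs_mul, sq_abs, mul_assoc] using two_mul_le_add_sq |a| |b|

lemma abs_integral_two_mul_le {f g : ℝ → ℝ} (hf : Continuous f) (hg : Continuous g)
    {s t a b : ℝ} (hab : a ≤ b) (hst : Set.uIoc s t ⊆ Set.uIoc a b) :
    |∫ x in s..t, 2 * (f x * g x)| ≤ (∫ x in a..b, f x ^ 2) + ∫ x in a..b, g x ^ 2 := by
  have hfg : Continuous fun x => |2 * (f x * g x)| := by fun_prop
  calc |∫ x in s..t, 2 * (f x * g x)|
      ≤ |∫ x in s..t, (|2 * (f x * g x)|)| :=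
        norm_integral_le_abs_integral_norm (f := fun x => 2 * (f x * g x))
    _ ≤ |∫ x in a..b, (|2 * (f x * g x)|)| :=
        abs_integral_mono_interval hst (MeasureTheory.ae_of_all _ fun _ => abs_nonneg _)
          (hfg.intervalIntegrable _ _)
    _ = ∫ x in a..b, |2 * (f x * g x)| :=
        abs_of_nonneg (integral_nonneg hab fun _ _ => abs_nonneg _)
    _ ≤ ∫ x in a..b, (f x ^ 2 + g x ^ 2) :=
        integral_mono_on hab (hfg.intervalIntegrable _ _)
          ((by fun_prop : Continuous fun x => f x ^ 2 + g x ^ 2).intervalIntegrable _ _)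
          fun x _ => abs_two_mul_le_sq_add_sq _ _
    _ = (∫ x in a..b, f x ^ 2) + ∫ x in a..b, g x ^ 2 :=
        integral_add ((hf.pow 2).intervalIntegrable _ _) ((hg.pow 2).intervalIntegrable _ _)

lemma abs_integral_mul_le_half_add {f g : ℝ → ℝ} (hf : Continuous f) (hg : Continuous g)
    {a b : ℝ} (hab : a ≤ b) :
    |∫ x in a..b, f x * g x| ≤ 1 / 2 * ((∫ x in a..b, f x ^ 2) + ∫ x in a..b, g x ^ 2) := by
  have h := abs_integral_two_mul_le hf hg hab le_rfl
  rw [integral_const_mul, abs_mul, abs_two] at h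
  linarith

lemma sq_le_two_mul_integral_sq_add_integral_deriv_sq {v : ℝ → ℝ} (hv : ContDiff ℝ 1 v)
    {t : ℝ} (ht : t ∈ Set.Icc (0 : ℝ) 1) :
    v t ^ 2 ≤ 2 * ((∫ x in (0 : ℝ)..1, v x ^ 2) + ∫ x in (0 : ℝ)..1, deriv v x ^ 2) := by
  have hdiff := hv.differentiable one_ne_zero
  have hv' : Continuous (deriv v) := hv.continuous_deriv le_rfl
  obtain ⟨c, hc, hc_avg⟩ := exists_eq_interval_average (f := fun x => v x ^ 2) zero_ne_one
    (hv.continuous.pow 2).continuousOn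
  rw [interval_average_eq_div, sub_zero, div_one] at hc_avg
  rw [Set.uIoo_of_le zero_le_one] at hc
  have hftc : ∫ x in c..t, 2 * (v x * deriv v x) = v t ^ 2 - v c ^ 2 := by
    refine integral_eq_sub_of_hasDerivAt (f := fun x => v x ^ 2) (fun x _ => ?_)
      ((by fun_prop : Continuous fun x => 2 * (v x * deriv v x)).intervalIntegrable _ _)
    exact ((hdiff x).hasDerivAt.fun_pow 2).congr_deriv (by push_cast; ring)
  have hsub : Set.uIoc c t ⊆ Set.uIoc 0 1 := by
    rw [Set.uIoc_of_le zero_le_one]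
    exact Set.Ioc_subset_Ioc (le_min hc.1.le ht.1) (max_le hc.2.le ht.2)
  have hbound := abs_integral_two_mul_le hv.continuous hv' zero_le_one hsub
  have hD : 0 ≤ ∫ x in (0 : ℝ)..1, deriv v x ^ 2 :=
    integral_nonneg zero_le_one fun _ _ => sq_nonneg _
  rw [hftc] at hbound
  linarith [le_abs_self (v t ^ 2 - v c ^ 2)]

section Algebra

variable {p α β q N W P A B E ψ δ C : ℝ}

lemma half_sub_inv_mul_le_sub_potential (hq : 0 < q) (hqp : q ≤ p) (hqα : q ≤ α) (hqβ : q ≤ β)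
    (hP : 0 ≤ P) (hA : 0 ≤ A) (hB : 0 ≤ B) (hI : 0 ≤ N - P - A - B) :
    (1 / 2 - 1 / q) * N ≤ 1 / 2 * N - 1 / p * P - 1 / α * A - 1 / β * B := by
  have hp := mul_le_mul_of_nonneg_right (one_div_le_one_div_of_le hq hqp) hP
  have hα := mul_le_mul_of_nonneg_right (one_div_le_one_div_of_le hq hqα) hA
  have hβ := mul_le_mul_of_nonneg_right (one_div_le_one_div_of_le hq hqβ) hB
  have hN := mul_le_mul_of_nonneg_left (sub_nonneg.1 (by linarith : 0 ≤ N - (P + A + B)))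
    (one_div_nonneg.2 hq.le)
  linarith

lemma lyapunov_lower_bound (hq : 2 < q) (hδ : 0 ≤ δ) (hδq : δ < (q - 2) / q)
    (hW : 0 ≤ W) (hN : 0 ≤ N) (hE : 1 / 2 * W + (1 / 2 - 1 / q) * N ≤ E)
    (hψ : -(1 / 2 * (N + W)) ≤ ψ) :
    min (1 - δ) ((q - 2) / q - δ) * E ≤ E + δ * ψ := by
  set r := (q - 2) / q
  have hr : r / 2 = 1 / 2 - 1 / q := by simp only [r]; field_simp
  have hr1 : r < 1 := by simp only [r]; rw [div_lt_one (by linarith)]; linarith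
  set β₁ := min (1 - δ) (r - δ)
  have hβW : δ ≤ 1 - β₁ := by linarith [min_le_left (1 - δ) (r - δ)]
  -- `(1 - β₁) r ≥ (1 - r + δ) r ≥ δ` since `(r - δ)(1 - r) ≥ 0`
  have hβN : δ ≤ (1 - β₁) * r := by
    nlinarith [min_le_right (1 - δ) (r - δ),
      mul_nonneg (sub_nonneg.2 hδq.le) (sub_nonneg.2 hr1.le)]
  rw [← hr] at hE
  linarith [mul_le_mul_of_nonneg_left hE (by linarith : 0 ≤ 1 - β₁),
    mul_le_mul_of_nonneg_right hβW hW, mul_le_mul_of_nonneg_right hβN hN,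
    mul_le_mul_of_nonneg_left hψ hδ]

lemma lyapunov_upper_bound (hq : 2 < q) (hδ : 0 ≤ δ) (hC : 0 ≤ C)
    (hW : 0 ≤ W) (hN : 0 ≤ N) (hE : 1 / 2 * W + (1 / 2 - 1 / q) * N ≤ E)
    (hψ : ψ ≤ 1 / 2 * W + C * N) :
    E + δ * ψ ≤ (1 + δ + 2 * q / (q - 2) * (1 / 2 + δ * C)) * E := by
  set K := 2 * q / (q - 2)
  have hK : 0 < K := div_pos (by linarith) (by linarith)
  have hKq : K * (1 / 2 - 1 / q) = 1 := by
    simp only [K]; field_simp; rw [div_self (by linarith)]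
  have hq' : 0 ≤ 1 / 2 - 1 / q := by
    linarith [one_div_le_one_div_of_le two_pos hq.le]
  have hWE : 1 / 2 * W ≤ E := by linarith [mul_nonneg hq' hN]
  have hNE : N ≤ K * E := by
    linarith [mul_le_mul_of_nonneg_left hE hK.le, mul_nonneg hK.le hW, congrArg (· * N) hKq]
  linarith [mul_le_mul_of_nonneg_left hψ hδ, mul_le_mul_of_nonneg_left hNE (mul_nonneg hδ hC),
    mul_nonneg hK.le (by linarith : 0 ≤ E), mul_le_mul_of_nonneg_left hWE hδ]

end Algebra

/-- Lemma 4.4: equivalence of the Lyapunov functional and the energy. -/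
theorem stmt_13 (p α β lam lam₀ lam₁ δ : ℝ) (hp : 2 < p) (hα : 2 < α) (hβ : 2 < β)
    (hlam : 0 < lam) (hlam₀ : 0 < lam₀) (hlam₁ : 0 < lam₁)
    (hδ : 0 < δ) (hδ' : δ < (min p (min α β) - 2) / min p (min α β))
    (v w : ℝ → ℝ) (hv : ContDiff ℝ 1 v) (hw : Continuous w)
    (hI : 0 ≤ ((∫ x in (0:ℝ)..1, (v x) ^ 2) + ∫ x in (0:ℝ)..1, (deriv v x) ^ 2) -
        (∫ x in (0:ℝ)..1, |v x| ^ p) - |v 0| ^ α - |v 1| ^ β) :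
    (let q := min p (min α β);
     let nsq := (∫ x in (0:ℝ)..1, (v x) ^ 2) + ∫ x in (0:ℝ)..1, (deriv v x) ^ 2;
     let E := (1 / 2) * (∫ x in (0:ℝ)..1, (w x) ^ 2) + (1 / 2) * nsq -
       (1 / p) * (∫ x in (0:ℝ)..1, |v x| ^ p) - (1 / α) * |v 0| ^ α - (1 / β) * |v 1| ^ β;
     let ψ := (∫ x in (0:ℝ)..1, v x * w x) + (lam / 2) * (∫ x in (0:ℝ)..1, (v x) ^ 2) +
       (lam₀ / 2) * |v 0| ^ 2 + (lam₁ / 2) * |v 1| ^ 2;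
     let β₁ := min (1 - δ) ((q - 2) / q - δ);
     let β₂ := 1 + δ + (2 * q / (q - 2)) * (1 / 2 + δ * ((1 + lam) / 2 + lam₀ + lam₁));
     0 < β₁ ∧ β₁ * E ≤ E + δ * ψ ∧ E + δ * ψ ≤ β₂ * E) := by
  intro q nsq E ψ β₁ β₂
  have hq : 2 < q := lt_min hp (lt_min hα hβ)
  have hsq_nonneg (f : ℝ → ℝ) : 0 ≤ ∫ x in (0:ℝ)..1, f x ^ 2 :=
    integral_nonneg zero_le_one fun _ _ => sq_nonneg _
  have hE : 1 / 2 * (∫ x in (0:ℝ)..1, w x ^ 2) + (1 / 2 - 1 / q) * nsq ≤ E := by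
    have := half_sub_inv_mul_le_sub_potential (by linarith) (min_le_left p _)
      ((min_le_right p _).trans (min_le_left α β)) ((min_le_right p _).trans (min_le_right α β))
      (integral_nonneg zero_le_one fun _ _ => by positivity) (by positivity) (by positivity) hI
    simp only [E]
    linarith
  have hS := abs_le.1 (abs_integral_mul_le_half_add hv.continuous hw zero_le_one)
  have hv₀ := sq_le_two_mul_integral_sq_add_integral_deriv_sq hv (Set.left_mem_Icc.2 zero_le_one)
  have hv₁ := sq_le_two_mul_integral_sq_add_integral_deriv_sq hv (Set.right_mem_Icc.2 zero_le_one)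
  have hV := hsq_nonneg v
  have hD := hsq_nonneg (deriv v)
  have hW := hsq_nonneg w
  refine ⟨lt_min ?_ (sub_pos.2 hδ'), ?_, ?_⟩
  · have : (q - 2) / q < 1 := (div_lt_one (by linarith)).2 (by linarith)
    linarith
  · refine lyapunov_lower_bound hq hδ.le hδ' hW (by positivity) hE ?_
    simp only [ψ, sq_abs]
    linarith [mul_nonneg hlam.le hV, mul_nonneg hlam₀.le (sq_nonneg (v 0)),
      mul_nonneg hlam₁.le (sq_nonneg (v 1))]
  · refine lyapunov_upper_bound hq hδ.le (by positivity) hW (by positivity) hE ?_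
    simp only [ψ, sq_abs, nsq]
    linarith [mul_le_mul_of_nonneg_left hv₀ hlam₀.le, mul_le_mul_of_nonneg_left hv₁ hlam₁.le,
      mul_nonneg hlam.le hD]
end
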